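/- arXiv:math-ph/9907011 — 8 statements merged into one kernel-verified Lean document; each statement's English description precedes it below -/
import Mathlib

section
/- The binary Rudin–Shapiro sequence x contains no palindromic factor of length 15: there is no i : ℕ such that x (i + j) = x (i + 14 − j) for all j < 15. -/
/-- `rsCount n` is the number of (possibly overlapping) `11`-blocks in the binary
expansion of `n`, i.e. the number of indices `k` such that bits `k` and `k+1` of `n`
are both `1`.  (Bits `k ≥ n` of `n` all vanish, so `Finset.range n` suffices.) -/
def rsCount (n : ℕ) : ℕ :=
  ((Finset.range n).filter (fun k => n.testBit k ∧ n.testBit (k + 1))).card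

/-- The binary Rudin–Shapiro sequence, `x n = rsCount n (mod 2)`. -/
def rsB (n : ℕ) : Fin 2 := Fin.ofNat 2 (rsCount n)

/-- The sequence `x` contains a palindromic factor of length `ℓ`. -/
def HasPalFactor {A : Type*} (x : ℕ → A) (ℓ : ℕ) : Prop :=
  ∃ i : ℕ, ∀ j < ℓ, x (i + j) = x (i + ℓ - 1 - j)

/-- The sequence `x` is palindromic: it contains palindromic factors of
arbitrarily large length. -/
def Palindromic {A : Type*} (x : ℕ → A) : Prop :=
  ∀ N : ℕ, ∃ ℓ : ℕ, N ≤ ℓ ∧ HasPalFactor x ℓ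

lemma rsCount_eq_sum (n N : ℕ) (h : n ≤ N) :
    rsCount n = ∑ k ∈ Finset.range N, if n.testBit k ∧ n.testBit (k + 1) then 1 else 0 := by
  rw [rsCount, Finset.card_filter]
  obtain ⟨d, rfl⟩ := Nat.exists_eq_add_of_le h
  induction d with
  | zero => simp
  | succ d ih =>
      rw [← Nat.add_assoc, Finset.sum_range_succ, ← ih (by omega)]
      have : n.testBit (n + d) = false :=
        Nat.testBit_lt_two_pow (lt_of_lt_of_le (Nat.lt_two_pow_self (n := n))
          (Nat.pow_le_pow_right (by norm_num) (Nat.le_add_right _ _)))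
      simp [this]

lemma rsCount_step (m b : ℕ) (hb : b < 2) :
    rsCount (2 * m + b) = rsCount m + (if b = 1 ∧ m % 2 = 1 then 1 else 0) := by
  have hdiv : (2 * m + b) / 2 = m := by omega
  rw [rsCount_eq_sum (2 * m + b) ((2 * m + 1) + 1) (by omega), Finset.sum_range_succ']
  have h1 : ∀ k, ((2 * m + b).testBit (k + 1) ∧ (2 * m + b).testBit (k + 2)) =
      (m.testBit k ∧ m.testBit (k + 1)) := by
    intro k
    simp [Nat.testBit_succ, hdiv]
  have h2 : ∑ k ∈ Finset.range (2 * m + 1),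
      (if (2 * m + b).testBit (k + 1) ∧ (2 * m + b).testBit (k + 1 + 1) then 1 else 0) =
      rsCount m := by
    rw [rsCount_eq_sum m (2 * m + 1) (by omega)]
    apply Finset.sum_congr rfl
    intro k _
    simp only [show k + 1 + 1 = k + 2 from rfl, h1 k]
  rw [h2]
  congr 1
  have hb0 : (2 * m + b).testBit 0 = decide ((2 * m + b) % 2 = 1) := Nat.testBit_zero _
  have hb1 : (2 * m + b).testBit 1 = decide (m % 2 = 1) := by
    rw [show (1 : ℕ) = 0 + 1 from rfl, Nat.testBit_succ, hdiv, Nat.testBit_zero]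
  have hmod : (2 * m + b) % 2 = b := by omega
  simp only [hb0, hb1, hmod]
  interval_cases b <;> rcases Nat.mod_two_eq_zero_or_one m with h | h <;> simp [h]

lemma rsB_step (m b : ℕ) (hb : b < 2) :
    rsB (2 * m + b) = rsB m + (if b = 1 ∧ m % 2 = 1 then 1 else 0) := by
  rw [rsB, rsB, rsCount_step m b hb]
  split_ifs <;> simp [Fin.ext_iff, Fin.val_add, Nat.add_mod]

lemma rsB_split : ∀ k q s : ℕ, s < 2 ^ (k + 1) →
    rsB (2 ^ (k + 1) * q + s) =
      rsB q + rsB s + (if s.testBit k ∧ q % 2 = 1 then 1 else 0) := by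
  intro k
  induction k with
  | zero =>
      intro q s hs
      have hs' : s < 2 := by omega
      interval_cases s
      · rw [show 2 ^ 1 * q + 0 = 2 * q + 0 from by ring, rsB_step q 0 (by norm_num)]
        simp [rsB, rsCount]
      · rw [show 2 ^ 1 * q + 1 = 2 * q + 1 from by ring, rsB_step q 1 (by norm_num)]
        have : rsB 1 = 0 := by decide
        have ht : Nat.testBit 1 0 = true := by decide
        simp [this, ht]
  | succ k ih =>
      intro q s hs
      have hsd : s / 2 < 2 ^ (k + 1) := by omega
      have h1 : 2 ^ (k + 1 + 1) * q + s = 2 * (2 ^ (k + 1) * q + s / 2) + s % 2 := by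
        have := Nat.div_add_mod s 2
        ring_nf
        omega
      have h2 : (2 ^ (k + 1) * q + s / 2) % 2 = (s / 2) % 2 := by
        have hh : 2 ^ (k + 1) * q = 2 * (2 ^ k * q) := by ring
        omega
      rw [h1, rsB_step _ _ (Nat.mod_lt _ (by norm_num)), ih q (s / 2) hsd,
        show s = 2 * (s / 2) + s % 2 from by omega]
      rw [rsB_step (s / 2) (s % 2) (Nat.mod_lt _ (by norm_num))]
      have h3 : (2 * (s / 2) + s % 2).testBit (k + 1) = (s / 2).testBit k := by
        rw [Nat.testBit_succ]
        congr 1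
        omega
      have h4 : (2 * (s / 2) + s % 2) / 2 = s / 2 := by omega
      rw [h3, h4, h2]
      have h5 : (2 * (s / 2) + s % 2) % 2 = s % 2 := by omega
      rw [h5]
      abel

/-- The window function: value of `rsB (i + j)` expressed via `r = i % 32`,
`e = i / 32 % 2`, `a = rsB (i / 32)`, `b = rsB (i / 32 + 1)`. -/
def rsW (r e : ℕ) (a b : Fin 2) (j : ℕ) : Fin 2 :=
  if r + j < 32 then
    a + rsB (r + j) + (if (r + j).testBit 4 ∧ e = 1 then 1 else 0)
  else
    b + rsB (r + j - 32) + (if (r + j - 32).testBit 4 ∧ e = 0 then 1 else 0)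

lemma rsB_window (i j : ℕ) (hj : j ≤ 14) :
    rsB (i + j) = rsW (i % 32) (i / 32 % 2) (rsB (i / 32)) (rsB (i / 32 + 1)) j := by
  rw [rsW]
  split
  · next h =>
      have h1 : i + j = 2 ^ (4 + 1) * (i / 32) + (i % 32 + j) := by omega
      rw [h1, rsB_split 4 (i / 32) (i % 32 + j) (by omega)]
  · next h =>
      have h1 : i + j = 2 ^ (4 + 1) * (i / 32 + 1) + (i % 32 + j - 32) := by omega
      rw [h1, rsB_split 4 (i / 32 + 1) (i % 32 + j - 32) (by omega)]
      congr 1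
      apply if_congr _ rfl rfl
      constructor
      · rintro ⟨hb, hm⟩; exact ⟨hb, by omega⟩
      · rintro ⟨hb, hm⟩; exact ⟨hb, by omega⟩

lemma rsW_key : ∀ r : Fin 32, ∀ e : Fin 2, ∀ a b : Fin 2, ∃ j : Fin 15,
    rsW r.val e.val a b j.val ≠ rsW r.val e.val a b (14 - j.val) := by decide

/-- The binary Rudin–Shapiro sequence contains no palindromic factor of length 15. -/
theorem rsB_no_palindrome_fifteen :
    ¬ ∃ i : ℕ, ∀ j < 15, rsB (i + j) = rsB (i + 14 - j) := by
  rintro ⟨i, h⟩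
  obtain ⟨j, hj⟩ := rsW_key ⟨i % 32, Nat.mod_lt _ (by norm_num)⟩
    ⟨i / 32 % 2, Nat.mod_lt _ (by norm_num)⟩ (rsB (i / 32)) (rsB (i / 32 + 1))
  apply hj
  have hjv : (j : ℕ) < 15 := j.isLt
  have h1 := h j hjv
  rw [show i + 14 - (j : ℕ) = i + (14 - (j : ℕ)) from by omega] at h1
  rw [← rsB_window i j (by omega), ← rsB_window i (14 - (j : ℕ)) (by omega)]
  exact h1
end

section
/- The binary Rudin–Shapiro sequence x contains a palindromic factor of length ℓ for every ℓ in {1, 2, 3, 4, 5, 6, 7, 8, 10, 12, 14}: for each such ℓ there exists i : ℕ with x (i + j) = x (i + ℓ − 1 − j) for all j < ℓ. -/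
/-- The binary Rudin–Shapiro sequence contains a palindromic factor of length `ℓ`
for every `ℓ ∈ {1, 2, 3, 4, 5, 6, 7, 8, 10, 12, 14}`. -/
theorem rsB_palindrome_lengths :
    ∀ ℓ ∈ ({1, 2, 3, 4, 5, 6, 7, 8, 10, 12, 14} : Finset ℕ), HasPalFactor rsB ℓ := by
  intro ℓ hℓ
  fin_cases hℓ
  · exact ⟨0, by decide⟩
  · exact ⟨0, by decide⟩
  · exact ⟨0, by decide⟩
  · exact ⟨3, by decide⟩
  · exact ⟨1, by decide⟩
  · exact ⟨2, by decide⟩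
  · exact ⟨14, by decide⟩
  · exact ⟨1, by decide⟩
  · exact ⟨0, by decide⟩
  · exact ⟨31, by decide⟩
  · exact ⟨30, by decide⟩
end

section
/- The quaternary Rudin–Shapiro sequence u contains no palindromic factor of length 8 and none of length 9; consequently u contains no palindromic factor of any length m ≥ 8, and u is not palindromic. -/
/-- First letters of the substitution `σ : a ↦ ab, b ↦ ac, c ↦ db, d ↦ dc`
(letters `a = 0, b = 1, c = 2, d = 3`). -/
def rsQFst : Fin 4 → Fin 4 := ![0, 0, 3, 3]

/-- Second letters of the substitution `σ : a ↦ ab, b ↦ ac, c ↦ db, d ↦ dc`. -/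
def rsQSnd : Fin 4 → Fin 4 := ![1, 2, 1, 2]

/-- The quaternary Rudin–Shapiro sequence: the fixed point of `σ` starting with `a`,
given by `u 0 = a`, `u (2n) = ` first letter of `σ (u n)`, `u (2n+1) = ` second
letter of `σ (u n)`. -/
def rsQ : ℕ → Fin 4
  | 0 => 0
  | (n + 1) =>
      if (n + 1) % 2 = 0 then rsQFst (rsQ ((n + 1) / 2))
      else rsQSnd (rsQ ((n + 1) / 2))
  decreasing_by all_goals exact Nat.div_lt_self (Nat.succ_pos n) one_lt_two

/-!
Even positions of `u` carry `a` or `d` and odd positions carry `b` or `c`, so the two ends of a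
factor of even length differ. For odd lengths, read the letters `a, b, c, d` as the binary
numbers `00, 01, 10, 11`. By `σ`, the high bit of `u (2n)` and of `u (2n + 1)` is the high and the
low bit of `u n`, so a palindrome of length 9 in `u` yields palindromes of lengths 4 and 5 in the
two bit sequences at half the position; since the high bit is the low bit twisted by the parity,
one bit sequence is then constant on five consecutive positions. But the low bit changes inside
every pair `(2m, 2m + 1)` with `m` even and the high bit inside every such pair with `m` odd.
Longer odd palindromes are trimmed down to length 9.
-/

theorem HasPalFactor.of_add_two_mul {A : Type*} {x : ℕ → A} {ℓ t : ℕ}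
    (h : HasPalFactor x (ℓ + 2 * t)) : HasPalFactor x ℓ := by
  obtain ⟨i, h⟩ := h
  refine ⟨i + t, fun j hj => ?_⟩
  convert h (t + j) (by omega) using 2 <;> omega

lemma apply_eq_apply_of_palindrome {A : Type*} {x : ℕ → A} {i ℓ : ℕ}
    (h : ∀ j < ℓ, x (i + j) = x (i + ℓ - 1 - j)) (p q : ℕ)
    (hpq : p + q + 1 = 2 * i + ℓ := by omega) (hp : i ≤ p := by omega)
    (hq : i ≤ q := by omega) : x p = x q := by
  convert h (p - i) (by omega) using 2 <;> omega

lemma not_const_window_of_two_mul_ne {A : Type*} {g : ℕ → A} {p : ℕ} (hp : p < 2)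
    (hg : ∀ m, m % 2 = p → g (2 * m) ≠ g (2 * m + 1)) (k : ℕ) :
    ¬ ∀ j ≤ 4, g (k + j) = g k := by
  intro h
  -- one of `⌈k/2⌉` and `⌈k/2⌉ + 1`, whichever has parity `p`
  set m := (k + 1) / 2 + ((k + 1) / 2 + p) % 2
  apply hg m (by omega)
  rw [show 2 * m = k + (2 * m - k) by omega, h _ (by omega),
    show k + (2 * m - k) + 1 = k + (2 * m + 1 - k) by omega, h _ (by omega)]

lemma rsQ_two_mul (n : ℕ) : rsQ (2 * n) = rsQFst (rsQ n) := by
  cases n with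
  | zero => rw [rsQ]; decide
  | succ m =>
    rw [show 2 * (m + 1) = 2 * m + 1 + 1 by ring, rsQ, if_pos (by omega),
      show (2 * m + 1 + 1) / 2 = m + 1 by omega]

lemma rsQ_two_mul_add_one (n : ℕ) : rsQ (2 * n + 1) = rsQSnd (rsQ n) := by
  rw [rsQ, if_neg (by omega), show (2 * n + 1) / 2 = n by omega]

lemma rsQ_two_mul_ne_two_mul_add_one (a b : ℕ) : rsQ (2 * a) ≠ rsQ (2 * b + 1) := by
  rw [rsQ_two_mul, rsQ_two_mul_add_one]
  generalize rsQ a = x; generalize rsQ b = y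
  revert x y; decide

theorem rsQ_not_hasPalFactor_of_even {ℓ : ℕ} (hℓ : Even ℓ) (hℓ0 : ℓ ≠ 0) :
    ¬ HasPalFactor rsQ ℓ := by
  rintro ⟨i, h⟩
  have hends := h 0 (Nat.pos_of_ne_zero hℓ0)
  obtain ⟨k, rfl⟩ := hℓ
  obtain ⟨m, rfl | rfl⟩ := Nat.even_or_odd' i
  · rw [show 2 * m + (k + k) - 1 - 0 = 2 * (m + k - 1) + 1 by omega] at hends
    exact rsQ_two_mul_ne_two_mul_add_one _ _ hends
  · rw [show 2 * m + 1 + (k + k) - 1 - 0 = 2 * (m + k) by omega] at hends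
    exact rsQ_two_mul_ne_two_mul_add_one _ _ hends.symm

def rsQHi (n : ℕ) : Bool := (rsQ n : ℕ).testBit 1

def rsQLo (n : ℕ) : Bool := (rsQ n : ℕ).testBit 0

lemma rsQHi_two_mul (n : ℕ) : rsQHi (2 * n) = rsQHi n := by
  unfold rsQHi; rw [rsQ_two_mul]; generalize rsQ n = x; revert x; decide

lemma rsQLo_two_mul (n : ℕ) : rsQLo (2 * n) = rsQHi n := by
  unfold rsQHi rsQLo; rw [rsQ_two_mul]; generalize rsQ n = x; revert x; decide

lemma rsQHi_two_mul_add_one (n : ℕ) : rsQHi (2 * n + 1) = rsQLo n := by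
  unfold rsQHi rsQLo; rw [rsQ_two_mul_add_one]; generalize rsQ n = x; revert x; decide

lemma rsQLo_two_mul_add_one (n : ℕ) : rsQLo (2 * n + 1) = !rsQLo n := by
  unfold rsQLo; rw [rsQ_two_mul_add_one]; generalize rsQ n = x; revert x; decide

lemma rsQHi_eq_rsQLo_xor (n : ℕ) : rsQHi n = (rsQLo n ^^ (n % 2 == 1)) := by
  obtain ⟨m, rfl | rfl⟩ := Nat.even_or_odd' n
  · rw [rsQHi_two_mul, rsQLo_two_mul, Nat.mul_mod_right]
    simp
  · rw [rsQHi_two_mul_add_one, rsQLo_two_mul_add_one, Nat.mul_add_mod]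
    simp

lemma rsQHi_eq_iff_rsQLo_eq {a b : ℕ} (hab : a % 2 = b % 2) :
    rsQHi a = rsQHi b ↔ rsQLo a = rsQLo b := by
  rw [rsQHi_eq_rsQLo_xor, rsQHi_eq_rsQLo_xor, hab, Bool.xor_left_inj]

lemma rsQLo_two_mul_ne_of_even {m : ℕ} (hm : m % 2 = 0) :
    rsQLo (2 * m) ≠ rsQLo (2 * m + 1) := by
  rw [rsQLo_two_mul, rsQLo_two_mul_add_one, rsQHi_eq_rsQLo_xor, hm]
  cases rsQLo m <;> decide

lemma rsQHi_two_mul_ne_of_odd {m : ℕ} (hm : m % 2 = 1) :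
    rsQHi (2 * m) ≠ rsQHi (2 * m + 1) := by
  rw [rsQHi_two_mul, rsQHi_two_mul_add_one, rsQHi_eq_rsQLo_xor, hm]
  cases rsQLo m <;> decide

lemma rsQHi_eq_of_rsQ_two_mul_eq {a b : ℕ} (h : rsQ (2 * a) = rsQ (2 * b)) :
    rsQHi a = rsQHi b := by
  rw [← rsQHi_two_mul, ← rsQHi_two_mul b]; unfold rsQHi; rw [h]

lemma rsQLo_eq_of_rsQ_two_mul_add_one_eq {a b : ℕ} (h : rsQ (2 * a + 1) = rsQ (2 * b + 1)) :
    rsQLo a = rsQLo b := by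
  rw [← rsQHi_two_mul_add_one, ← rsQHi_two_mul_add_one b]; unfold rsQHi; rw [h]

lemma rsQLo_const_of_palindrome_at_even {k : ℕ}
    (h : ∀ j < 9, rsQ (2 * k + j) = rsQ (2 * k + 9 - 1 - j)) :
    ∀ j ≤ 4, rsQLo (k + j) = rsQLo k := by
  have h04 : rsQLo (k + 4) = rsQLo k := (rsQHi_eq_iff_rsQLo_eq (by omega)).1 <|
    rsQHi_eq_of_rsQ_two_mul_eq (apply_eq_apply_of_palindrome h (2 * (k + 4)) (2 * k))
  have h13 : rsQLo (k + 1) = rsQLo (k + 3) := (rsQHi_eq_iff_rsQLo_eq (by omega)).1 <|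
    rsQHi_eq_of_rsQ_two_mul_eq (apply_eq_apply_of_palindrome h (2 * (k + 1)) (2 * (k + 3)))
  have h30 : rsQLo (k + 3) = rsQLo k := rsQLo_eq_of_rsQ_two_mul_add_one_eq <|
    apply_eq_apply_of_palindrome h (2 * (k + 3) + 1) (2 * k + 1)
  have h12 : rsQLo (k + 1) = rsQLo (k + 2) := rsQLo_eq_of_rsQ_two_mul_add_one_eq <|
    apply_eq_apply_of_palindrome h (2 * (k + 1) + 1) (2 * (k + 2) + 1)
  intro j hj
  interval_cases j
  exacts [rfl, h13.trans h30, h12.symm.trans (h13.trans h30), h30, h04]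

lemma rsQHi_const_of_palindrome_at_odd {k : ℕ}
    (h : ∀ j < 9, rsQ (2 * k + 1 + j) = rsQ (2 * k + 1 + 9 - 1 - j)) :
    ∀ j ≤ 4, rsQHi (k + j) = rsQHi k := by
  have h40 : rsQHi (k + 4) = rsQHi k := (rsQHi_eq_iff_rsQLo_eq (by omega)).2 <|
    rsQLo_eq_of_rsQ_two_mul_add_one_eq <|
      apply_eq_apply_of_palindrome h (2 * (k + 4) + 1) (2 * k + 1)
  have h13 : rsQHi (k + 1) = rsQHi (k + 3) := (rsQHi_eq_iff_rsQLo_eq (by omega)).2 <|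
    rsQLo_eq_of_rsQ_two_mul_add_one_eq <|
      apply_eq_apply_of_palindrome h (2 * (k + 1) + 1) (2 * (k + 3) + 1)
  have h14 : rsQHi (k + 1) = rsQHi (k + 4) := rsQHi_eq_of_rsQ_two_mul_eq <|
    apply_eq_apply_of_palindrome h (2 * (k + 1)) (2 * (k + 4))
  have h23 : rsQHi (k + 2) = rsQHi (k + 3) := rsQHi_eq_of_rsQ_two_mul_eq <|
    apply_eq_apply_of_palindrome h (2 * (k + 2)) (2 * (k + 3))
  have h10 : rsQHi (k + 1) = rsQHi k := h14.trans h40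
  intro j hj
  interval_cases j
  exacts [rfl, h10, h23.trans (h13.symm.trans h10), h13.symm.trans h10, h40]

theorem rsQ_not_hasPalFactor_nine : ¬ HasPalFactor rsQ 9 := by
  rintro ⟨i, h⟩
  obtain ⟨k, rfl | rfl⟩ := Nat.even_or_odd' i
  · exact not_const_window_of_two_mul_ne (by norm_num) (fun _ => rsQLo_two_mul_ne_of_even) k
      (rsQLo_const_of_palindrome_at_even h)
  · exact not_const_window_of_two_mul_ne (by norm_num) (fun _ => rsQHi_two_mul_ne_of_odd) k
      (rsQHi_const_of_palindrome_at_odd h)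

theorem rsQ_not_hasPalFactor_of_eight_le {m : ℕ} (hm : 8 ≤ m) : ¬ HasPalFactor rsQ m := by
  obtain ⟨t, rfl | rfl⟩ := Nat.even_or_odd' m
  · exact rsQ_not_hasPalFactor_of_even (even_two_mul t) (by omega)
  · obtain ⟨s, rfl⟩ : ∃ s, t = s + 4 := ⟨t - 4, by omega⟩
    rw [show 2 * (s + 4) + 1 = 9 + 2 * s by ring]
    exact fun h => rsQ_not_hasPalFactor_nine h.of_add_two_mul

/-- The quaternary Rudin–Shapiro sequence contains no palindromic factor of length 8
and none of length 9; consequently it contains no palindromic factor of any length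
`m ≥ 8`, and it is not palindromic. -/
theorem rsQ_not_palindromic :
    ¬ HasPalFactor rsQ 8 ∧ ¬ HasPalFactor rsQ 9 ∧
    (∀ m : ℕ, 8 ≤ m → ¬ HasPalFactor rsQ m) ∧ ¬ Palindromic rsQ := by
  refine ⟨rsQ_not_hasPalFactor_of_even (by decide) (by norm_num), rsQ_not_hasPalFactor_nine,
    fun m hm => rsQ_not_hasPalFactor_of_eight_le hm, fun hpal => ?_⟩
  obtain ⟨ℓ, hℓ, hfac⟩ := hpal 8
  exact rsQ_not_hasPalFactor_of_eight_le hℓ hfac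
end

section
/- The quaternary Rudin–Shapiro sequence u contains a palindromic factor of length ℓ exactly for ℓ ∈ {1, 3, 5, 7}: for each such ℓ there is a palindromic factor of length ℓ in u, and for every other ℓ ≥ 1 there is none. -/
/-- `rsQSubst r x` is the letter at position `r % 2` of `σ(x)`. -/
def rsQSubst (r : ℕ) : Fin 4 → Fin 4 := if r % 2 = 0 then rsQFst else rsQSnd

/-- `rsQSubstIter k x r` is the letter at position `r` of `σ^k(x)`. -/
def rsQSubstIter : ℕ → Fin 4 → ℕ → Fin 4
  | 0, x, _ => x
  | k + 1, x, r => rsQSubst r (rsQSubstIter k x (r / 2))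

/-- The letter at position `s` of the word `σ^k(p) σ^k(q)`. -/
def rsQSubstPair (k : ℕ) (p q : Fin 4) (s : ℕ) : Fin 4 :=
  if s < 2 ^ k then rsQSubstIter k p s else rsQSubstIter k q (s - 2 ^ k)

theorem rsQ_two_mul_add (n r : ℕ) (hr : r < 2) : rsQ (2 * n + r) = rsQSubst r (rsQ n) := by
  have hdiv : (2 * n + r) / 2 = n := by omega
  have hmod : (2 * n + r) % 2 = r % 2 := by omega
  rcases hm : 2 * n + r with _ | m
  · obtain ⟨rfl, rfl⟩ : n = 0 ∧ r = 0 := by omega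
    rw [rsQ.eq_1]
    rfl
  · rw [rsQ, ← hm, hdiv, hmod, rsQSubst]
    split_ifs <;> rfl

theorem rsQ_pow_mul_add (k n r : ℕ) (hr : r < 2 ^ k) :
    rsQ (2 ^ k * n + r) = rsQSubstIter k (rsQ n) r := by
  induction k generalizing r with
  | zero =>
    obtain rfl : r = 0 := by omega
    simp [rsQSubstIter]
  | succ k ih =>
    have hsplit : 2 ^ (k + 1) * n + r = 2 * (2 ^ k * n + r / 2) + r % 2 := by
      rw [pow_succ, mul_comm (2 ^ k) 2, mul_assoc]; omega
    rw [hsplit, rsQ_two_mul_add _ _ (Nat.mod_lt _ two_pos), ih _ (by rw [pow_succ] at hr; omega),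
      rsQSubstIter, rsQSubst, rsQSubst, Nat.mod_mod]

theorem rsQ_pow_mul_add_of_lt_two_mul (k n s : ℕ) (hs : s < 2 * 2 ^ k) :
    rsQ (2 ^ k * n + s) = rsQSubstPair k (rsQ n) (rsQ (n + 1)) s := by
  unfold rsQSubstPair
  split_ifs with h
  · exact rsQ_pow_mul_add k n s h
  · rw [← rsQ_pow_mul_add k (n + 1) (s - 2 ^ k) (by omega)]
    congr 1
    rw [mul_add]; omega

section

variable {A : Type*} {x : ℕ → A}

theorem HasPalFactor.of_add_two {ℓ : ℕ} (h : HasPalFactor x (ℓ + 2)) :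
    HasPalFactor x ℓ := by
  obtain ⟨i, hi⟩ := h
  refine ⟨i + 1, fun j hj => ?_⟩
  have := hi (j + 1) (by omega)
  rwa [show i + (j + 1) = i + 1 + j by omega,
    show i + (ℓ + 2) - 1 - (j + 1) = i + 1 + ℓ - 1 - j by omega] at this

theorem HasPalFactor.of_add_two_mul_s8 {ℓ : ℕ} (m : ℕ)
    (h : HasPalFactor x (ℓ + 2 * m)) : HasPalFactor x ℓ := by
  induction m with
  | zero => exact h
  | succ m ih => exact ih (HasPalFactor.of_add_two (by rwa [mul_add_one, ← add_assoc] at h))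

theorem not_hasPalFactor_of_even (f : A → ℕ) (hf : ∀ n, f (x n) = n % 2)
    {ℓ : ℕ} (hℓ : Even ℓ) (hpos : 0 < ℓ) : ¬ HasPalFactor x ℓ := by
  rintro ⟨i, hi⟩
  have hends := congrArg f (hi 0 hpos)
  rw [hf, hf] at hends
  obtain ⟨k, rfl⟩ := hℓ
  omega

end

theorem rsQ_parity (n : ℕ) : ![0, 1, 1, 0] (rsQ n) = n % 2 := by
  have hsubst : ∀ r < 2, ∀ y : Fin 4, ![0, 1, 1, 0] (rsQSubst r y) = r := by decide
  rw [← Nat.div_add_mod n 2, rsQ_two_mul_add _ _ (Nat.mod_lt _ two_pos),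
    hsubst _ (Nat.mod_lt _ two_pos)]
  omega

theorem hasPalFactor_rsQ_of_prefix (k i ℓ : ℕ) (hk : i + ℓ ≤ 2 ^ k)
    (h : ∀ j < ℓ, rsQSubstIter k 0 (i + j) = rsQSubstIter k 0 (i + ℓ - 1 - j)) :
    HasPalFactor rsQ ℓ := by
  have hprefix : ∀ r < 2 ^ k, rsQ r = rsQSubstIter k 0 r := fun r hr => by
    simpa [rsQ.eq_1] using rsQ_pow_mul_add k 0 r hr
  exact ⟨i, fun j hj => by rw [hprefix _ (by omega), hprefix _ (by omega), h j hj]⟩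

/-- The quaternary Rudin–Shapiro sequence contains a palindromic factor of length `ℓ`
exactly for `ℓ ∈ {1, 3, 5, 7}`. -/
theorem rsQ_palindrome_lengths :
    (∀ ℓ ∈ ({1, 3, 5, 7} : Finset ℕ), HasPalFactor rsQ ℓ) ∧
    (∀ ℓ : ℕ, 1 ≤ ℓ → ℓ ∉ ({1, 3, 5, 7} : Finset ℕ) → ¬ HasPalFactor rsQ ℓ) := by
  refine ⟨fun ℓ hℓ => ?_, fun ℓ hℓ hℓ' => ?_⟩
  · simp only [Finset.mem_insert, Finset.mem_singleton] at hℓ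
    rcases hℓ with rfl | rfl | rfl | rfl
    · exact hasPalFactor_rsQ_of_prefix 5 0 1 (by norm_num) (by decide)
    · exact hasPalFactor_rsQ_of_prefix 5 0 3 (by norm_num) (by decide)
    · exact hasPalFactor_rsQ_of_prefix 5 1 5 (by norm_num) (by decide)
    · exact hasPalFactor_rsQ_of_prefix 5 14 7 (by norm_num) (by decide)
  · simp only [Finset.mem_insert, Finset.mem_singleton, not_or] at hℓ'
    rcases Nat.even_or_odd ℓ with heven | ⟨m, rfl⟩
    · exact not_hasPalFactor_of_even _ rsQ_parity heven hℓ
    · rw [show 2 * m + 1 = 9 + 2 * (m - 4) by omega]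
      exact fun h => rsQ_not_hasPalFactor_nine (h.of_add_two_mul_s8 (m - 4))
end

section
/- Let A be a finite type with the discrete topology and x : ℤ → A. Then x is repetitive if and only if the orbit closure of x under the shift is minimal, i.e. if and only if for every y in the closure of the shift orbit of x (in the product topology on A^ℤ), the closure of the shift orbit of y equals the closure of the shift orbit of x. -/
/-- The shift `S` on bi-infinite sequences: `(S x) n = x (n + 1)`. -/
def shiftZ {A : Type*} (x : ℤ → A) : ℤ → A := fun n => x (n + 1)

/-- The shift orbit `{ S^k x | k ∈ ℤ }` of a bi-infinite sequence `x`. -/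
def shiftOrbit {A : Type*} (x : ℤ → A) : Set (ℤ → A) :=
  {y | ∃ k : ℤ, y = fun n => x (n + k)}

/-- A word `w : Fin ℓ → A` occurs in `x : ℤ → A` if there is `n : ℤ` with
`w j = x (n + j)` for all `j < ℓ`. -/
def OccursIn {A : Type*} {ℓ : ℕ} (w : Fin ℓ → A) (x : ℤ → A) : Prop :=
  ∃ n : ℤ, ∀ j : Fin ℓ, w j = x (n + (j : ℕ))

/-- `x` is repetitive: for every `ℓ` there exists `L` such that every length-`ℓ` word
occurring in `x` occurs at some position inside every window of `L` consecutive
positions of `x`. -/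
def Repetitive {A : Type*} (x : ℤ → A) : Prop :=
  ∀ ℓ : ℕ, ∃ L : ℕ, ∀ w : Fin ℓ → A, OccursIn w x →
    ∀ n : ℤ, ∃ m : ℤ, n ≤ m ∧ m + ℓ ≤ n + L ∧ ∀ j : Fin ℓ, w j = x (m + (j : ℕ))

/-- The LI-class of `x`: all sequences `y` that are locally indistinguishable from `x`,
i.e. have exactly the same finite factors as `x`. -/
def LIClass {A : Type*} (x : ℤ → A) : Set (ℤ → A) :=
  {y | ∀ (ℓ : ℕ) (w : Fin ℓ → A), OccursIn w x ↔ OccursIn w y}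

/-- The factor of `x` of length `ℓ` at position `n` is a palindrome:
`x (n + j) = x (n + ℓ - 1 - j)` for all `j < ℓ`. -/
def IsPalFactorAt {A : Type*} (x : ℤ → A) (ℓ : ℕ) (n : ℤ) : Prop :=
  ∀ j : ℕ, j < ℓ → x (n + (j : ℕ)) = x (n + ((ℓ - 1 - j : ℕ) : ℤ))

/-- `x` is palindromic: it contains palindromic factors of arbitrarily large length. -/
def PalindromicZ {A : Type*} (x : ℤ → A) : Prop :=
  ∀ N : ℕ, ∃ ℓ : ℕ, N ≤ ℓ ∧ ∃ n : ℤ, IsPalFactorAt x ℓ n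

/-- The centre `n + (ℓ - 1)/2` (as a real number) of a factor of length `ℓ` at
position `n`. -/
noncomputable def factorCentre (ℓ : ℕ) (n : ℤ) : ℝ := (n : ℝ) + ((ℓ : ℝ) - 1) / 2

/-- `x` is strongly palindromic: there are `B > 0` and palindromic factors of lengths
`ℓ i` at positions `n i`, with centres `m i = n i + (ℓ i - 1)/2`, such that
`|m i| → ∞` and `exp (B * |m i|) / ℓ i → 0`. -/
def StronglyPalindromicZ {A : Type*} (x : ℤ → A) : Prop :=
  ∃ B : ℝ, 0 < B ∧ ∃ (ℓ : ℕ → ℕ) (n : ℕ → ℤ),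
    (∀ i, IsPalFactorAt x (ℓ i) (n i)) ∧
    Filter.Tendsto (fun i => |factorCentre (ℓ i) (n i)|) Filter.atTop Filter.atTop ∧
    Filter.Tendsto (fun i => Real.exp (B * |factorCentre (ℓ i) (n i)|) / (ℓ i : ℝ))
      Filter.atTop (nhds 0)

/-- The reversal `R` of a bi-infinite sequence: `(R x) n = x (-n)`. -/
def revZ {A : Type*} (x : ℤ → A) : ℤ → A := fun n => x (-n)

/-! A word of `x` occurs in every point of the orbit closure exactly when it occurs in `x` with
bounded gaps. If the gaps are at most `L`, the word occurs in the window of length `L` at the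
origin of `y`, which is also a window of `x`. If there are arbitrarily long gaps, centring them
at the origin and passing to a limit by compactness of `A^ℤ` gives a point of the orbit closure
avoiding the word. Finally, a point of the orbit closure has the same orbit closure as `x` iff
every word of `x` occurs in it. -/

open Filter

section

variable {A : Type*} {ℓ : ℕ}

def MatchesAt (w : Fin ℓ → A) (z : ℤ → A) (p : ℤ) : Prop :=
  ∀ j : Fin ℓ, w j = z (p + (j : ℕ))

def HasGap (w : Fin ℓ → A) (x : ℤ → A) (L : ℕ) : Prop :=
  ∃ n : ℤ, ∀ m, n ≤ m → m + ℓ ≤ n + L → ¬ MatchesAt w x m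

lemma hasGap_antitone (w : Fin ℓ → A) (x : ℤ → A) : Antitone (HasGap w x) :=
  fun _ _ hLL' ⟨n, hn⟩ => ⟨n, fun m hnm hmL => hn m hnm (by omega)⟩

lemma self_mem_shiftOrbit (x : ℤ → A) : x ∈ shiftOrbit x :=
  ⟨0, by simp⟩

lemma exists_occursIn_hasGap_of_not_repetitive [Finite A] {x : ℤ → A} (hx : ¬ Repetitive x) :
    ∃ (ℓ : ℕ) (w : Fin ℓ → A), OccursIn w x ∧ ∀ L, HasGap w x L := by
  simp only [Repetitive, not_forall, not_exists, not_and, exists_prop] at hx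
  obtain ⟨ℓ, hℓ⟩ := hx
  have hfreq : ∃ᶠ L in atTop, ∃ w : Fin ℓ → A, OccursIn w x ∧ HasGap w x L :=
    Frequently.of_forall fun L => by simpa [HasGap, MatchesAt] using hℓ L
  obtain ⟨w, hw⟩ := frequently_exists.mp hfreq
  obtain ⟨-, hwx, -⟩ := hw.exists
  refine ⟨ℓ, w, hwx, fun L => ?_⟩
  obtain ⟨L', hLL', -, hgap⟩ := frequently_atTop.mp hw L
  exact hasGap_antitone w x hLL' hgap

variable [TopologicalSpace A] [DiscreteTopology A] {x y : ℤ → A}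

lemma isClopen_setOf_matchesAt (w : Fin ℓ → A) (p : ℤ) :
    IsClopen {z : ℤ → A | MatchesAt w z p} := by
  have hset : {z : ℤ → A | MatchesAt w z p} =
      ⋂ j : Fin ℓ, (fun z : ℤ → A => z (p + (j : ℕ))) ⁻¹' {w j} := by
    ext z
    simp [MatchesAt, eq_comm]
  rw [hset]
  exact isClopen_iInter_of_finite fun j => (isClopen_discrete _).preimage (continuous_apply _)

lemma mem_closure_shiftOrbit_iff :
    y ∈ closure (shiftOrbit x) ↔ ∀ F : Finset ℤ, ∃ k : ℤ, ∀ n ∈ F, y n = x (n + k) := by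
  constructor
  · intro hy F
    have hopen : IsOpen {z : ℤ → A | ∀ n ∈ F, z n = y n} := by
      have hset : {z : ℤ → A | ∀ n ∈ F, z n = y n} =
          ⋂ n ∈ F, (fun z : ℤ → A => z n) ⁻¹' {y n} := by
        ext z
        simp
      rw [hset]
      exact isOpen_biInter_finset fun n _ =>
        (continuous_apply n).isOpen_preimage _ (isOpen_discrete {y n})
    obtain ⟨z, hzy, k, rfl⟩ := mem_closure_iff.mp hy _ hopen fun n _ => rfl
    exact ⟨k, fun n hn => (hzy n hn).symm⟩
  · intro h
    refine mem_closure_iff.mpr fun U hU hyU => ?_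
    obtain ⟨F, u, hu, hFU⟩ := isOpen_pi_iff.mp hU y hyU
    obtain ⟨k, hk⟩ := h F
    exact ⟨fun n => x (n + k), hFU fun n hn => hk n hn ▸ (hu n hn).2, k, rfl⟩

lemma mem_closure_shiftOrbit_iff_occursIn :
    y ∈ closure (shiftOrbit x) ↔ ∀ ⦃ℓ : ℕ⦄ (w : Fin ℓ → A), OccursIn w y → OccursIn w x := by
  rw [mem_closure_shiftOrbit_iff]
  constructor
  · rintro hy ℓ w ⟨p, hp⟩
    obtain ⟨k, hk⟩ := hy (Finset.univ.image fun j : Fin ℓ => p + (j : ℕ))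
    refine ⟨p + k, fun j => ?_⟩
    rw [hp j, hk _ (Finset.mem_image_of_mem _ (Finset.mem_univ j))]
    ring_nf
  · intro hy F
    obtain ⟨N, hN⟩ : ∃ N : ℕ, ∀ n ∈ F, n.natAbs < N :=
      ⟨F.sup Int.natAbs + 1, fun n hn => Nat.lt_succ_of_le (F.le_sup (f := Int.natAbs) hn)⟩
    obtain ⟨m, hm⟩ := hy (fun j : Fin (2 * N) => y (j - N)) ⟨-N, fun j => by ring_nf⟩
    refine ⟨m + N, fun n hn => ?_⟩
    have hnN := hN n hn
    have hj : ((n + N).toNat : ℤ) = n + N := by omega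
    have := hm ⟨(n + N).toNat, by omega⟩
    simp only [hj] at this
    convert this using 2 <;> ring

lemma closure_shiftOrbit_subset_iff :
    closure (shiftOrbit y) ⊆ closure (shiftOrbit x) ↔ y ∈ closure (shiftOrbit x) := by
  refine ⟨fun h => h (subset_closure (self_mem_shiftOrbit y)), fun hy z hz => ?_⟩
  rw [mem_closure_shiftOrbit_iff_occursIn] at hy hz ⊢
  exact fun ℓ w hw => hy w (hz w hw)

lemma closure_shiftOrbit_eq_iff (hy : y ∈ closure (shiftOrbit x)) :
    closure (shiftOrbit y) = closure (shiftOrbit x) ↔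
      ∀ ⦃ℓ : ℕ⦄ (w : Fin ℓ → A), OccursIn w x → OccursIn w y := by
  rw [subset_antisymm_iff, closure_shiftOrbit_subset_iff, closure_shiftOrbit_subset_iff,
    ← mem_closure_shiftOrbit_iff_occursIn]
  exact and_iff_right hy

lemma Repetitive.occursIn_of_mem_closure (hx : Repetitive x) (hy : y ∈ closure (shiftOrbit x))
    {w : Fin ℓ → A} (hw : OccursIn w x) : OccursIn w y := by
  obtain ⟨L, hL⟩ := hx ℓ
  obtain ⟨k, hk⟩ := mem_closure_shiftOrbit_iff_occursIn.mp hy (fun i : Fin L => y i)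
    ⟨0, fun i => by simp⟩
  -- the window `y[0, L)` occurs in `x` at `k`, and `w` occurs in that window of `x`
  obtain ⟨m, hkm, hmL, hm⟩ := hL w hw k
  refine ⟨m - k, fun j => ?_⟩
  have hi : ((m - k + (j : ℕ)).toNat : ℤ) = m - k + (j : ℕ) := by omega
  have := hk ⟨(m - k + (j : ℕ)).toNat, by omega⟩
  simp only [hi] at this
  rw [hm j, this]
  ring_nf

lemma exists_mem_closure_not_occursIn_of_hasGap [Finite A] {w : Fin ℓ → A}
    (hgap : ∀ L, HasGap w x L) :
    ∃ y ∈ closure (shiftOrbit x), ¬ OccursIn w y := by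
  let S (K : ℕ) : Set (ℤ → A) :=
    closure (shiftOrbit x) ∩ ⋂ p ∈ Set.Icc (-(K : ℤ)) K, {z | MatchesAt w z p}ᶜ
  have hS_succ (K : ℕ) : S (K + 1) ⊆ S K := by
    refine Set.inter_subset_inter_right _ (Set.biInter_subset_biInter_left ?_)
    intro p hp
    simp only [Set.mem_Icc] at hp ⊢
    omega
  have hS_closed (K : ℕ) : IsClosed (S K) :=
    isClosed_closure.inter <| isClosed_biInter fun p _ =>
      (isClopen_setOf_matchesAt w p).isOpen.isClosed_compl
  have hS_nonempty (K : ℕ) : (S K).Nonempty := by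
    obtain ⟨n, hn⟩ := hgap (2 * K + ℓ)
    refine ⟨fun i => x (i + (n + K)), subset_closure ⟨n + K, rfl⟩,
      Set.mem_iInter₂.mpr fun p hp hpw => ?_⟩
    obtain ⟨hp₁, hp₂⟩ := hp
    refine hn (p + (n + K)) (by omega) (by push_cast; omega) fun j => ?_
    rw [hpw j]
    ring_nf
  obtain ⟨y, hy⟩ := IsCompact.nonempty_iInter_of_sequence_nonempty_isCompact_isClosed S hS_succ
    hS_nonempty (hS_closed 0).isCompact hS_closed
  rw [Set.mem_iInter] at hy
  refine ⟨y, (hy 0).1, fun ⟨p, hp⟩ => ?_⟩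
  exact Set.mem_iInter₂.mp (hy p.natAbs).2 p (Set.mem_Icc.mpr ⟨by omega, by omega⟩) hp

end

/-- Gottschalk: a bi-infinite sequence over a finite (discrete) alphabet is repetitive
if and only if its shift-orbit closure (in the product topology) is minimal, i.e. every
element of the orbit closure has the same orbit closure. -/
theorem repetitive_iff_minimal {A : Type*} [Fintype A] [TopologicalSpace A]
    [DiscreteTopology A] (x : ℤ → A) :
    Repetitive x ↔
      ∀ y ∈ closure (shiftOrbit x), closure (shiftOrbit y) = closure (shiftOrbit x) := by
  constructor
  · intro hx y hy
    exact (closure_shiftOrbit_eq_iff hy).mpr fun _ _ hw => hx.occursIn_of_mem_closure hy hw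
  · intro hmin
    by_contra hx
    obtain ⟨ℓ, w, hw, hgap⟩ := exists_occursIn_hasGap_of_not_repetitive hx
    obtain ⟨y, hy, hwy⟩ := exists_mem_closure_not_occursIn_of_hasGap hgap
    exact hwy ((closure_shiftOrbit_eq_iff hy).mp (hmin y hy) w hw)
end

section
/- Let A be a finite type and x : ℤ → A be repetitive, palindromic and periodic (S^p x = x for some p ≠ 0). Then every element of LI(x) is strongly palindromic. -/
/-- Iterated periodicity. -/
lemma periodZ_zsmul {A : Type*} {y : ℤ → A} {q : ℤ} (h : ∀ n, y (n + q) = y n) :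
    ∀ k : ℤ, ∀ t : ℤ, y (t + k * q) = y t := by
  intro k
  induction k using Int.induction_on with
  | zero => simp
  | succ k ih =>
      intro t
      have e : t + ((k : ℤ) + 1) * q = (t + k * q) + q := by ring
      rw [e, h, ih]
  | pred k ih =>
      intro t
      have e : t + (-(k : ℤ)) * q = (t + (-(k : ℤ) - 1) * q) + q := by ring
      have h2 := ih t
      rw [e, h] at h2
      exact h2

/-- If `x` is repetitive, palindromic and periodic (`S^p x = x` for some `p ≠ 0`),
then every element of its LI-class is strongly palindromic. -/
theorem stronglyPalindromic_of_periodic {A : Type*} [Fintype A] (x : ℤ → A)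
    (hrep : Repetitive x) (hpal : PalindromicZ x)
    (hper : ∃ p : ℤ, p ≠ 0 ∧ (fun n => x (n + p)) = x) :
    ∀ y ∈ LIClass x, StronglyPalindromicZ y := by
  intro y hy
  obtain ⟨p, hp0, hperiod⟩ := hper
  have hx : ∀ n, x (n + p) = x n := fun n => congrFun hperiod n
  set q : ℤ := |p| with hqdef
  have hq0 : 0 < q := abs_pos.mpr hp0
  have hxq : ∀ n, x (n + q) = x n := by
    rcases abs_choice p with h | h
    · intro n; rw [hqdef, h]; exact hx n
    · intro n
      have h2 := hx (n + -p)
      rw [hqdef, h]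
      have e : n + -p + p = n := by ring
      rw [e] at h2
      exact h2.symm
  -- `y` is periodic with period `q`
  have hyq : ∀ n, y (n + q) = y n := by
    intro n
    obtain ⟨m, hm⟩ := (hy (q.toNat + 1) (fun j => y (n + (j : ℕ)))).mpr ⟨n, fun j => rfl⟩
    have h1 := hm ⟨q.toNat, by omega⟩
    have h0 := hm ⟨0, by omega⟩
    simp only at h1 h0
    have hcast : ((q.toNat : ℕ) : ℤ) = q := Int.toNat_of_nonneg hq0.le
    rw [hcast] at h1
    calc y (n + q) = x (m + q) := h1
    _ = x m := hxq m
    _ = y n := by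
        have : x (m + ((0 : ℕ) : ℤ)) = y (n + ((0 : ℕ) : ℤ)) := by
          push_cast at h0 ⊢; exact h0.symm
        simpa using this
  have hyzs := periodZ_zsmul hyq
  -- `y` contains palindromic factors of arbitrarily large length
  have hypal : ∀ N : ℕ, ∃ ℓ : ℕ, N ≤ ℓ ∧ ∃ n : ℤ, IsPalFactorAt y ℓ n := by
    intro N
    obtain ⟨ℓ, hℓ, n, hpaln⟩ := hpal N
    obtain ⟨m, hm⟩ := (hy ℓ (fun j => x (n + (j : ℕ)))).mp ⟨n, fun j => rfl⟩
    refine ⟨ℓ, hℓ, m, ?_⟩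
    intro j hj
    have h1 := hm ⟨j, hj⟩
    have h2 := hm ⟨ℓ - 1 - j, by omega⟩
    simp only at h1 h2
    rw [← h1, ← h2]
    exact hpaln j hj
  -- get a long palindromic factor in `y` and produce a global symmetry axis
  obtain ⟨ℓ0, hℓ0, n0, hpal0⟩ := hypal (q.toNat)
  set c : ℤ := 2 * n0 + ℓ0 - 1 with hcdef
  have hsym : ∀ t : ℤ, y t = y (c - t) := by
    intro t
    set k : ℤ := (t - n0) / q with hkdef
    set r : ℤ := (t - n0) % q with hrdef
    have hde : q * k + r = t - n0 := Int.mul_ediv_add_emod (t - n0) q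
    have hr0 : 0 ≤ r := Int.emod_nonneg _ hq0.ne'
    have hrq : r < q := Int.emod_lt_of_pos _ hq0
    have hrl : r.toNat < ℓ0 := by omega
    have hpr := hpal0 r.toNat hrl
    have hrcast : ((r.toNat : ℕ) : ℤ) = r := Int.toNat_of_nonneg hr0
    have hrcast2 : ((ℓ0 - 1 - r.toNat : ℕ) : ℤ) = (ℓ0 : ℤ) - 1 - r := by omega
    rw [hrcast, hrcast2] at hpr
    have e1 : t = (n0 + r) + k * q := by linear_combination -hde
    have e2 : c - t = (n0 + ((ℓ0 : ℤ) - 1 - r)) + (-k) * q := by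
      linear_combination hcdef + hde
    calc y t = y ((n0 + r) + k * q) := by rw [← e1]
      _ = y (n0 + r) := hyzs k _
      _ = y (n0 + ((ℓ0 : ℤ) - 1 - r)) := hpr
      _ = y ((n0 + ((ℓ0 : ℤ) - 1 - r)) + (-k) * q) := (hyzs (-k) _).symm
      _ = y (c - t) := by rw [← e2]
  have hsym2 : ∀ k : ℤ, ∀ t : ℤ, y t = y (c + k * q - t) := by
    intro k t
    have e : c + k * q - t = (c - t) + k * q := by ring
    rw [e, hyzs k]
    exact hsym t
  -- construction of the palindromic factors
  set s : ℕ := if Even c then 1 else 2 with hsdef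
  set E : ℕ → ℝ := fun i => Real.exp (|(c : ℝ)| + 2 * (i : ℝ) * (q : ℝ)) with hEdef
  set K : ℕ → ℕ := fun i => ⌈E i⌉₊ * (i + 1) with hKdef
  set L : ℕ → ℕ := fun i => 2 * K i + s with hLdef
  have hLpos : ∀ i, 0 < L i := by
    intro i; rw [hLdef]; simp only; rw [hsdef]; split <;> omega
  set nn : ℕ → ℤ := fun i => (c + 2 * i * q - L i + 1) / 2 with hnndef
  have hn2 : ∀ i, 2 * nn i = c + 2 * i * q - L i + 1 := by
    intro i
    have hdvd : (2 : ℤ) ∣ (c + 2 * i * q - L i + 1) := by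
      have hL : (L i : ℤ) = 2 * K i + s := by rw [hLdef]; push_cast; ring
      rcases Int.even_or_odd c with ⟨m, hm⟩ | ⟨m, hm⟩
      · have hs : s = 1 := by rw [hsdef, if_pos ⟨m, hm⟩]
        rw [hL, hs, hm]; push_cast; ring_nf; exact ⟨m + i * q - K i, by ring⟩
      · have hs : s = 2 := by
          rw [hsdef, if_neg]
          rw [← Int.not_odd_iff_even]; push_neg; exact ⟨m, hm⟩
        rw [hL, hs, hm]; push_cast; exact ⟨m + i * q - K i, by ring⟩
    rw [hnndef]
    exact Int.mul_ediv_cancel' hdvd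
  have hpalfac : ∀ i, IsPalFactorAt y (L i) (nn i) := by
    intro i j hj
    have h1 := hsym2 (2 * i) (nn i + j)
    have e : c + (2 * i : ℤ) * q - (nn i + j) = nn i + ((L i - 1 - j : ℕ) : ℤ) := by
      have h2 := hn2 i
      have hc : ((L i - 1 - j : ℕ) : ℤ) = (L i : ℤ) - 1 - j := by
        have := hLpos i
        push_cast [Nat.cast_sub (by omega : j ≤ L i - 1), Nat.cast_sub (by omega : 1 ≤ L i)]
        omega
      rw [hc]; omega
    rw [e] at h1
    exact h1
  -- centres
  have hcentre : ∀ i, factorCentre (L i) (nn i) = ((c : ℝ) + 2 * (i : ℝ) * (q : ℝ)) / 2 := by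
    intro i
    have h2 := hn2 i
    have h2' : (2 : ℝ) * (nn i : ℝ) = (c : ℝ) + 2 * i * q - (L i : ℝ) + 1 := by
      exact_mod_cast congrArg (fun z : ℤ => (z : ℝ)) h2
    rw [factorCentre]
    have hLne : (0 : ℝ) < (L i : ℝ) := by exact_mod_cast hLpos i
    linarith
  have hq1 : (1 : ℝ) ≤ (q : ℝ) := by exact_mod_cast hq0
  -- |centre| → ∞
  have htend1 : Filter.Tendsto (fun i => |factorCentre (L i) (nn i)|) Filter.atTop Filter.atTop := by
    apply Filter.tendsto_atTop_mono (f := fun i : ℕ => (c : ℝ) / 2 + (i : ℝ))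
    · intro i
      rw [hcentre i]
      have h1 : (c : ℝ) / 2 + (i : ℝ) ≤ ((c : ℝ) + 2 * (i : ℝ) * (q : ℝ)) / 2 := by
        have : (i : ℝ) * 1 ≤ (i : ℝ) * (q : ℝ) :=
          mul_le_mul_of_nonneg_left hq1 (Nat.cast_nonneg i)
        linarith
      exact h1.trans (le_abs_self _)
    · exact Filter.tendsto_atTop_add_const_left _ _ tendsto_natCast_atTop_atTop
  -- exp bound → 0
  have htend2 : Filter.Tendsto
      (fun i => Real.exp (1 * |factorCentre (L i) (nn i)|) / (L i : ℝ))
      Filter.atTop (nhds 0) := by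
    have hub : ∀ i : ℕ, Real.exp (1 * |factorCentre (L i) (nn i)|) / (L i : ℝ)
        ≤ 1 / ((i : ℝ) + 1) := by
      intro i
      have hLpos' : (0 : ℝ) < (L i : ℝ) := by exact_mod_cast hLpos i
      have hipos : (0 : ℝ) < (i : ℝ) + 1 := by positivity
      rw [div_le_div_iff₀ hLpos' hipos, one_mul]
      have hnonneg : (0 : ℝ) ≤ 2 * (i : ℝ) * (q : ℝ) := by positivity
      have habs : |factorCentre (L i) (nn i)| ≤ |(c : ℝ)| + 2 * (i : ℝ) * (q : ℝ) := by
        rw [hcentre i, abs_div, abs_two]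
        have h1 := abs_add_le (c : ℝ) (2 * (i : ℝ) * (q : ℝ))
        have h2 : |2 * (i : ℝ) * (q : ℝ)| = 2 * (i : ℝ) * (q : ℝ) := abs_of_nonneg hnonneg
        have h3 : (0 : ℝ) ≤ |(c : ℝ)| := abs_nonneg _
        rw [h2] at h1
        linarith
      have hexp : Real.exp |factorCentre (L i) (nn i)| ≤ E i := by
        rw [hEdef]
        exact Real.exp_le_exp.mpr habs
      have hE1 : E i ≤ (⌈E i⌉₊ : ℝ) := Nat.le_ceil _
      have hKL : (K i : ℝ) ≤ (L i : ℝ) := by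
        have : K i ≤ L i := by rw [hLdef]; simp only; omega
        exact_mod_cast this
      have hKval : (K i : ℝ) = (⌈E i⌉₊ : ℝ) * ((i : ℝ) + 1) := by
        rw [hKdef]; push_cast; ring
      calc Real.exp |factorCentre (L i) (nn i)| * ((i : ℝ) + 1)
          ≤ (⌈E i⌉₊ : ℝ) * ((i : ℝ) + 1) :=
            mul_le_mul_of_nonneg_right (hexp.trans hE1) hipos.le
        _ = (K i : ℝ) := hKval.symm
        _ ≤ (L i : ℝ) := hKL
        _ = 1 * (L i : ℝ) := (one_mul _).symm
    have hlb : ∀ i : ℕ, (0 : ℝ) ≤ Real.exp (1 * |factorCentre (L i) (nn i)|) / (L i : ℝ) := by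
      intro i
      have hLpos' : (0 : ℝ) < (L i : ℝ) := by exact_mod_cast hLpos i
      positivity
    exact tendsto_of_tendsto_of_tendsto_of_le_of_le tendsto_const_nhds
      tendsto_one_div_add_atTop_nhds_zero_nat hlb hub
  refine ⟨1, one_pos, L, nn, hpalfac, htend1, htend2⟩
end

section
/- Let A be a finite type and x : ℤ → A be repetitive and palindromic. Then there exists y ∈ LI(x) with R y = y or R y = S y, i.e. LI(x) contains an infinite palindrome (a sequence symmetric about an integer or half-integer point). -/
lemma palOdd' {A : Type*} (x : ℤ → A) (r : ℕ) (n : ℤ)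
    (h : IsPalFactorAt x (2*r+1) n) (m : ℕ) (hm : m ≤ r) :
    x (n + r - m) = x (n + r + m) := by
  have h1 := h (r - m) (by omega)
  rw [show (n + ((r - m : ℕ) : ℤ)) = n + r - m by omega,
      show (n + ((2*r+1 - 1 - (r - m) : ℕ) : ℤ)) = n + r + m by omega] at h1
  exact h1

lemma palEven' {A : Type*} (x : ℤ → A) (r : ℕ) (n : ℤ)
    (h : IsPalFactorAt x (2*r) n) (m : ℕ) (hm : m + 1 ≤ r) :
    x (n + r - 1 - m) = x (n + r + m) := by
  have h1 := h (r - 1 - m) (by omega)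
  rw [show (n + ((r - 1 - m : ℕ) : ℤ)) = n + r - 1 - m by omega,
      show (n + ((2*r - 1 - (r - 1 - m) : ℕ) : ℤ)) = n + r + m by omega] at h1
  exact h1

/-- If `x` is repetitive and palindromic, then its LI-class contains an infinite
palindrome: some `y ∈ LI(x)` with `R y = y` or `R y = S y`. -/
theorem infinite_palindrome_in_LIClass {A : Type*} [Fintype A] (x : ℤ → A)
    (hrep : Repetitive x) (hpal : PalindromicZ x) :
    ∃ y ∈ LIClass x, revZ y = y ∨ revZ y = shiftZ y := by
  classical
  have hchoose : ∀ k : ℕ, ∃ ℓ : ℕ, 2*k+2 ≤ ℓ ∧ ∃ n : ℤ, IsPalFactorAt x ℓ n := fun k =>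
    hpal (2*k+2)
  choose ℓf hℓf nf hnf using hchoose
  -- the centre-shift
  set c : ℕ → ℤ := fun k => nf k + (((ℓf k - 1) / 2 : ℕ) : ℤ) with hc
  obtain ⟨U, hU⟩ := Filter.exists_ultrafilter_le (Filter.atTop : Filter ℕ)
  -- ultrafilter limit
  have hlim : ∀ m : ℤ, ∃ a : A, ∀ᶠ k in (U : Filter ℕ), x (m + c k) = a := by
    intro m
    by_contra hcon
    push_neg at hcon
    have h1 : ∀ a : A, ∀ᶠ k in (U : Filter ℕ), x (m + c k) ≠ a := by
      intro a
      exact hcon a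
    have h2 : ∀ᶠ k in (U : Filter ℕ), ∀ a : A, x (m + c k) ≠ a :=
      Filter.eventually_all.mpr h1
    obtain ⟨k, hk⟩ := h2.exists
    exact hk (x (m + c k)) rfl
  choose y hy using hlim
  -- agreement on windows
  have hwin : ∀ (n : ℤ) (L : ℕ), ∀ᶠ k in (U : Filter ℕ),
      ∀ i : ℤ, n ≤ i → i < n + L → x (i + c k) = y i := by
    intro n L
    have h1 : ∀ᶠ k in (U : Filter ℕ), ∀ j : Fin L, x ((n + (j : ℕ)) + c k) = y (n + (j : ℕ)) :=
      Filter.eventually_all.mpr fun j => hy (n + (j : ℕ))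
    filter_upwards [h1] with k hk i hi1 hi2
    have hj : (i - n).toNat < L := by omega
    have h2 := hk ⟨(i - n).toNat, hj⟩
    simp only [Fin.val_mk] at h2
    rwa [show (n + (((i - n).toNat : ℕ) : ℤ)) = i by omega] at h2
  have hmem : y ∈ LIClass x := by
    intro L w
    constructor
    · rintro hocc
      obtain ⟨Lrep, hLrep⟩ := hrep L
      obtain ⟨k, hk⟩ := (hwin 0 Lrep).exists
      obtain ⟨m, hm1, hm2, hm3⟩ := hLrep w hocc (c k)
      refine ⟨m - c k, fun j => ?_⟩
      have hjL : (j : ℕ) < L := j.isLt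
      have h1 := hk (m - c k + (j : ℕ)) (by omega) (by omega)
      rw [hm3 j, ← h1]
      congr 1
      ring
    · rintro ⟨n0, hn0⟩
      obtain ⟨k, hk⟩ := (hwin n0 L).exists
      refine ⟨n0 + c k, fun j => ?_⟩
      have hjL : (j : ℕ) < L := j.isLt
      have h1 := hk (n0 + (j : ℕ)) (by omega) (by omega)
      rw [hn0 j, ← h1]
      congr 1
      ring
  rcases U.mem_or_compl_mem {k | Odd (ℓf k)} with hodd | heven
  · -- odd case: rev y = y
    refine ⟨y, hmem, Or.inl ?_⟩
    have key : ∀ m : ℕ, y (-(m : ℤ)) = y (m : ℤ) := by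
      intro m
      have hbig : ∀ᶠ k in (U : Filter ℕ), m ≤ k := hU (Filter.eventually_ge_atTop m)
      have hset : ∀ᶠ k in (U : Filter ℕ), Odd (ℓf k) := hodd
      obtain ⟨k, ⟨hk1, hk2⟩, hk3, hk4⟩ :=
        (((hy ((m : ℤ))).and (hy (-(m : ℤ)))).and (hset.and hbig)).exists
      obtain ⟨r, hr⟩ := hk3
      have hℓ := hℓf k
      have hrk : ℓf k = 2 * r + 1 := by omega
      have hsym := palOdd' x r (nf k) (hrk ▸ hnf k) m (by omega)
      have hck : c k = nf k + r := by rw [hc]; simp only; omega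
      rw [← hk1, ← hk2]
      rw [show (-(m : ℤ) + c k) = nf k + r - m by rw [hck]; ring,
          show ((m : ℤ) + c k) = nf k + r + m by rw [hck]; ring]
      exact hsym
    funext mm
    show y (-mm) = y mm
    obtain ⟨t, rfl | rfl⟩ := Int.eq_nat_or_neg mm
    · exact key t
    · rw [neg_neg]; exact (key t).symm
  · -- even case: rev y = shift y
    refine ⟨y, hmem, Or.inr ?_⟩
    have key : ∀ m : ℕ, y (-(m : ℤ)) = y ((m : ℤ) + 1) := by
      intro m
      have hbig : ∀ᶠ k in (U : Filter ℕ), m ≤ k := hU (Filter.eventually_ge_atTop m)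
      have hset : ∀ᶠ k in (U : Filter ℕ), ¬ Odd (ℓf k) := heven
      obtain ⟨k, ⟨hk1, hk2⟩, hk3, hk4⟩ :=
        (((hy ((m : ℤ) + 1)).and (hy (-(m : ℤ)))).and (hset.and hbig)).exists
      rw [Nat.not_odd_iff_even] at hk3
      obtain ⟨r, hr⟩ := hk3
      have hℓ := hℓf k
      have hrk : ℓf k = 2 * r := by omega
      have hsym := palEven' x r (nf k) (hrk ▸ hnf k) m (by omega)
      have hck : c k = nf k + r - 1 := by rw [hc]; simp only; omega
      rw [← hk1, ← hk2]
      rw [show (-(m : ℤ) + c k) = nf k + r - 1 - m by rw [hck]; ring,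
          show (((m : ℤ) + 1) + c k) = nf k + r + m by rw [hck]; ring]
      exact hsym
    funext mm
    show y (-mm) = y (mm + 1)
    obtain ⟨t, rfl | rfl⟩ := Int.eq_nat_or_neg mm
    · exact key t
    · rcases t with _ | s
      · simpa using key 0
      · rw [show (-(-((s+1 : ℕ) : ℤ))) = ((s : ℕ) : ℤ) + 1 by push_cast; ring,
            show (-((s+1 : ℕ) : ℤ) + 1) = -((s : ℕ) : ℤ) by push_cast; ring]
        exact (key s).symm
end

section
/- Let A be a finite type and x : ℤ → A be repetitive. Then x is palindromic if and only if LI(x) is strictly inversion symmetric, i.e. there exist y ∈ LI(x) and m : ℤ with R y = S^m y. -/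
private lemma palInt {A : Type*} {x : ℤ → A} {ℓ : ℕ} {n : ℤ} (h : IsPalFactorAt x ℓ n)
    (j : ℤ) (h0 : 0 ≤ j) (h1 : j < (ℓ : ℤ)) : x (n + j) = x (n + (ℓ : ℤ) - 1 - j) := by
  lift j to ℕ using h0
  have hj : j < ℓ := by exact_mod_cast h1
  have h2 := h j hj
  have hc : n + ((ℓ - 1 - j : ℕ) : ℤ) = n + (ℓ : ℤ) - 1 - j := by omega
  rw [hc] at h2
  exact h2

/-- For repetitive `x`, palindromicity of `x` is equivalent to strict inversion
symmetry of its LI-class: there are `y ∈ LI(x)` and `m : ℤ` with `R y = S^m y`. -/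
theorem palindromic_iff_strictInversionSymmetric {A : Type*} [Fintype A] (x : ℤ → A)
    (hrep : Repetitive x) :
    PalindromicZ x ↔ ∃ y ∈ LIClass x, ∃ m : ℤ, revZ y = fun n => y (n + m) := by
  constructor
  · intro hpal
    choose ℓ hℓ n hpaln using hpal
    -- centre data: s N is the (half-integer) centre, e N ∈ {0,1} the parity defect
    have key : ∀ N : ℕ, ∃ sv ev : ℤ, (ev = 0 ∨ ev = 1) ∧
        2 * sv + ev = 2 * n N + (ℓ N : ℤ) - 1 := by
      intro N
      refine ⟨(2 * n N + (ℓ N : ℤ) - 1) / 2, (2 * n N + (ℓ N : ℤ) - 1) % 2,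
        Int.emod_two_eq _, ?_⟩
      have := Int.mul_ediv_add_emod (2 * n N + (ℓ N : ℤ) - 1) 2
      omega
    choose s e hse2 hse using key
    have sym : ∀ (N : ℕ) (k : ℤ), 2 * k + 2 ≤ (ℓ N : ℤ) → -(2 * k) + 2 ≤ (ℓ N : ℤ) →
        x (k + s N) = x (e N - k + s N) := by
      intro N k h1 h2
      have he' : 0 ≤ e N ∧ e N ≤ 1 := by rcases hse2 N with h | h <;> omega
      have hse' := hse N
      have h3 := palInt (hpaln N) (k + s N - n N) (by omega) (by omega)
      have e1 : n N + (k + s N - n N) = k + s N := by ring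
      have e2 : n N + (ℓ N : ℤ) - 1 - (k + s N - n N) = e N - k + s N := by omega
      rw [e1, e2] at h3
      exact h3
    -- choose a parity class that occurs infinitely often
    have hbi : ∃ b : ℤ, {N : ℕ | e N = b}.Infinite := by
      by_contra hcon
      push_neg at hcon
      have h0 := hcon 0; have h1 := hcon 1
      have huniv : (Set.univ : Set ℕ).Finite := by
        apply Set.Finite.subset (h0.union h1)
        intro N _
        rcases hse2 N with h | h
        · exact Or.inl h
        · exact Or.inr h
      exact Set.infinite_univ huniv
    obtain ⟨b, hb⟩ := hbi
    have hch : ∀ i : ℕ, ∃ N : ℕ, e N = b ∧ i ≤ N := by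
      intro i
      by_contra hcon
      push_neg at hcon
      apply hb
      apply Set.Finite.subset (Set.finite_Iio i)
      intro N hN
      exact hcon N hN
    choose idx hidxb hidxge using hch
    -- compactness: take a cluster point of the recentred shifts
    letI : TopologicalSpace A := ⊥
    haveI : DiscreteTopology A := ⟨rfl⟩
    obtain ⟨y, hy⟩ := exists_clusterPt_of_compactSpace
      (Filter.map (fun i : ℕ => fun k : ℤ => x (k + s (idx i))) Filter.atTop)
    have hy' : MapClusterPt y Filter.atTop (fun i : ℕ => fun k : ℤ => x (k + s (idx i))) := hy
    have hfreq : ∀ t : Finset ℤ, ∃ᶠ i in Filter.atTop, ∀ j ∈ t, x (j + s (idx i)) = y j := by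
      intro t
      have hU : {z : ℤ → A | ∀ j ∈ t, z j = y j} ∈ nhds y := by
        have hopen : IsOpen {z : ℤ → A | ∀ j ∈ t, z j = y j} := by
          have heq : {z : ℤ → A | ∀ j ∈ t, z j = y j}
              = ⋂ j ∈ t, (fun z : ℤ → A => z j) ⁻¹' {y j} := by
            ext z; simp
          rw [heq]
          exact isOpen_biInter_finset fun j _ =>
            (continuous_apply j).isOpen_preimage _ (isOpen_discrete _)
        exact hopen.mem_nhds (fun j hj => rfl)
      exact (mapClusterPt_iff_frequently.mp hy') _ hU
    -- y is a centred palindrome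
    have hsymy : ∀ k : ℤ, y k = y (b - k) := by
      intro k
      obtain ⟨i, hagree, hige⟩ := ((hfreq {k, b - k}).and_eventually
        (Filter.eventually_ge_atTop ((2 * k + 2).toNat + (2 - 2 * k).toNat))).exists
      have hg1 := hℓ (idx i)
      have hg2 := hidxge i
      have h1 : x (k + s (idx i)) = y k := hagree k (by simp)
      have h2 : x (b - k + s (idx i)) = y (b - k) := hagree (b - k) (by simp)
      have h3 := sym (idx i) k (by omega) (by omega)
      rw [hidxb i] at h3
      rw [← h1, ← h2, h3]
    -- y is locally indistinguishable from x
    have hLI : y ∈ LIClass x := by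
      intro ℓ' w
      constructor
      · intro hw
        obtain ⟨L, hL⟩ := hrep ℓ'
        obtain ⟨i, hagree⟩ := (hfreq (Finset.Icc 0 (L : ℤ))).exists
        obtain ⟨m, hm1, hm2, hm3⟩ := hL w hw (s (idx i))
        refine ⟨m - s (idx i), fun j => ?_⟩
        have hjl := j.isLt
        have hmem : m - s (idx i) + (j : ℕ) ∈ Finset.Icc (0 : ℤ) (L : ℤ) := by
          rw [Finset.mem_Icc]; omega
        rw [← hagree _ hmem, hm3 j]
        congr 1; ring
      · rintro ⟨p, hp⟩
        obtain ⟨i, hagree⟩ := (hfreq (Finset.Icc p (p + ℓ'))).exists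
        refine ⟨p + s (idx i), fun j => ?_⟩
        have hjl := j.isLt
        have hmem : p + (j : ℕ) ∈ Finset.Icc p (p + (ℓ' : ℤ)) := by
          rw [Finset.mem_Icc]; omega
        rw [hp j, ← hagree _ hmem]
        congr 1; ring
    refine ⟨y, hLI, b, funext fun nn => ?_⟩
    show y (-nn) = y (nn + b)
    have := hsymy (-nn)
    rw [show b - -nn = nn + b by ring] at this
    exact this
  · rintro ⟨y, hy, m, hR⟩
    intro N
    have hsym : ∀ k : ℤ, y k = y (m - k) := by
      intro k
      have h1 := congrFun hR (-k)
      show y k = y (m - k)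
      rw [show m - k = -k + m by ring]
      have h2 : revZ y (-k) = y k := by simp [revZ]
      rw [← h2]; exact h1
    obtain ⟨ℓ', hN, c, hc⟩ : ∃ ℓ' : ℕ, N ≤ ℓ' ∧ ∃ c : ℤ, 2 * c = m - (ℓ' : ℤ) + 1 := by
      rcases Int.even_or_odd m with ⟨t, ht⟩ | ⟨t, ht⟩
      · exact ⟨2 * N + 1, by omega, t - N, by push_cast; omega⟩
      · exact ⟨2 * N + 2, by omega, t - N, by push_cast; omega⟩
    have hpy : IsPalFactorAt y ℓ' c := by
      intro j hj
      have h1 := hsym (c + (j : ℕ))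
      have h2 : m - (c + (j : ℕ)) = c + ((ℓ' - 1 - j : ℕ) : ℤ) := by omega
      rw [h2] at h1
      exact h1
    obtain ⟨p, hp⟩ : OccursIn (fun j : Fin ℓ' => y (c + (j : ℕ))) x :=
      (hy ℓ' _).mpr ⟨c, fun j => rfl⟩
    refine ⟨ℓ', hN, p, fun j hj => ?_⟩
    have e1 := hp ⟨j, hj⟩
    have hj2 : ℓ' - 1 - j < ℓ' := by omega
    have e2 := hp ⟨ℓ' - 1 - j, hj2⟩
    rw [← e1, ← e2]
    exact hpy j hj
end
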